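/- arXiv:2603.11454 — 8 statements merged into one kernel-verified Lean document; each statement's English description precedes it below -/
import Mathlib

section
/- If H is a nonempty well-ordered subset of ℝ, then the topological closure of H is also a well-ordered subset of ℝ, and the closure of H is countable. -/
/-- A well-ordered subset of `ℝ` is countable. -/
lemma wellOrdered_countable (K : Set ℝ)
    (hwo : ∀ S : Set ℝ, S ⊆ K → S.Nonempty → ∃ m ∈ S, ∀ x ∈ S, m ≤ x) :
    K.Countable := by
  classical
  -- successor function
  set T : Set ℝ := {k ∈ K | (K ∩ Set.Ioi k).Nonempty} with hT
  have hsucc : ∀ k ∈ T, ∃ s ∈ K ∩ Set.Ioi k, ∀ x ∈ K ∩ Set.Ioi k, s ≤ x := by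
    intro k hk
    exact hwo _ (Set.inter_subset_left) hk.2
  choose! s hsmem hsmin using hsucc
  have hq : ∀ k ∈ T, ∃ q : ℚ, k < (q : ℝ) ∧ (q : ℝ) < s k := by
    intro k hk
    exact exists_rat_btwn (hsmem k hk).2
  choose! q hq1 hq2 using hq
  have hTcount : T.Countable := by
    have hinj : Set.InjOn q T := by
      intro a ha b hb hab
      by_contra hne
      rcases lt_or_gt_of_ne hne with h | h
      · have h1 : s a ≤ b := hsmin a ha b ⟨hb.1, h⟩
        have : (q a : ℝ) < (q b : ℝ) := lt_of_lt_of_le (hq2 a ha) (h1.trans (hq1 b hb).le)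
        rw [hab] at this; exact lt_irrefl _ this
      · have h1 : s b ≤ a := hsmin b hb a ⟨ha.1, h⟩
        have : (q b : ℝ) < (q a : ℝ) := lt_of_lt_of_le (hq2 b hb) (h1.trans (hq1 a ha).le)
        rw [hab] at this; exact lt_irrefl _ this
    exact (Set.mapsTo_univ q T).countable_of_injOn hinj Set.countable_univ
  have hsub : (K \ T).Subsingleton := by
    intro a ha b hb
    by_contra hne
    rcases lt_or_gt_of_ne hne with h | h
    · exact ha.2 ⟨ha.1, ⟨b, hb.1, h⟩⟩
    · exact hb.2 ⟨hb.1, ⟨a, ha.1, h⟩⟩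
  have : K ⊆ T ∪ (K \ T) := by
    intro x hx
    by_cases hxT : x ∈ T
    · exact Or.inl hxT
    · exact Or.inr ⟨hx, hxT⟩
  exact Set.Countable.mono this (hTcount.union hsub.countable)

/-- The topological closure of a nonempty well-ordered subset of `ℝ` is well-ordered and
countable. -/
theorem closure_of_wellOrdered (H : Set ℝ) (hne : H.Nonempty)
    (hwo : ∀ S : Set ℝ, S ⊆ H → S.Nonempty → ∃ m ∈ S, ∀ x ∈ S, m ≤ x) :
    (∀ S : Set ℝ, S ⊆ closure H → S.Nonempty → ∃ m ∈ S, ∀ x ∈ S, m ≤ x) ∧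
      (closure H).Countable := by
  obtain ⟨h0, hh0, hh0min⟩ := hwo H (subset_refl _) hne
  have hclb : closure H ⊆ Set.Ici h0 := by
    apply closure_minimal _ isClosed_Ici
    exact fun x hx => hh0min x hx
  have main : ∀ S : Set ℝ, S ⊆ closure H → S.Nonempty → ∃ m ∈ S, ∀ x ∈ S, m ≤ x := by
    intro S hS hSne
    have hbdd : BddBelow S := ⟨h0, fun x hx => hclb (hS hx)⟩
    set m := sInf S with hm
    have hlb : ∀ x ∈ S, m ≤ x := fun x hx => csInf_le hbdd hx
    refine ⟨m, ?_, hlb⟩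
    by_contra hmS
    -- for every ε > 0, there is h ∈ H with m < h < m + ε
    have key : ∀ ε : ℝ, 0 < ε → ∃ h ∈ H, m < h ∧ h < m + ε := by
      intro ε hε
      -- find s ∈ S with m < s < m + ε/2
      have : ∃ x ∈ S, x < m + ε / 2 := by
        by_contra hc
        push_neg at hc
        have : m + ε / 2 ≤ m := le_csInf hSne hc
        linarith
      obtain ⟨x, hxS, hxlt⟩ := this
      have hxm : m < x := lt_of_le_of_ne (hlb x hxS) (fun h => hmS (h ▸ hxS))
      -- x ∈ closure H, find h ∈ H close to x
      have hxcl : x ∈ closure H := hS hxS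
      rw [Metric.mem_closure_iff] at hxcl
      have hδ : 0 < min (x - m) (m + ε - x) := by
        apply lt_min (by linarith) (by linarith)
      obtain ⟨h, hhH, hdist⟩ := hxcl _ hδ
      have hd : |x - h| < x - m ∧ |x - h| < m + ε - x := by
        simpa [Real.dist_eq, lt_min_iff] using hdist
      have h1 := abs_lt.1 hd.1
      have h2 := abs_lt.1 hd.2
      exact ⟨h, hhH, by linarith [h1.1, h1.2], by linarith [h2.1, h2.2]⟩
    -- H ∩ (m, ∞) is nonempty; its minimum leads to a contradiction
    obtain ⟨h1, hh1H, hh1m, _⟩ := key 1 one_pos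
    obtain ⟨t, htmem, htmin⟩ := hwo (H ∩ Set.Ioi m) Set.inter_subset_left ⟨h1, hh1H, hh1m⟩
    obtain ⟨h, hhH, hhm, hht⟩ := key (t - m) (by simpa using htmem.2)
    have : t ≤ h := htmin h ⟨hhH, hhm⟩
    linarith
  refine ⟨main, wellOrdered_countable _ main⟩
end

section
/- Let X be a dually well-ordered subset of ℝ that is closed under multiplication, contained in (0,1], and suppose X contains an accumulation point p of X with 0 < p < 1. Then the set of accumulation points of X is countably infinite. -/
/-- Let `X ⊆ (0,1]` be dually well-ordered (every nonempty subset has a greatest element)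
and closed under multiplication, and suppose `X` contains an accumulation point `p` of `X`
with `0 < p < 1`.  Then the set of accumulation points of `X` is countably infinite. -/
theorem acc_points_countably_infinite (X : Set ℝ)
    (hdwo : ∀ S : Set ℝ, S ⊆ X → S.Nonempty → ∃ m ∈ S, ∀ x ∈ S, x ≤ m)
    (hmul : ∀ a ∈ X, ∀ b ∈ X, a * b ∈ X)
    (hsub : X ⊆ Set.Ioc (0 : ℝ) 1)
    (p : ℝ) (hpX : p ∈ X) (hp0 : 0 < p) (hp1 : p < 1)
    (hacc : ∀ ε : ℝ, 0 < ε → ∃ x ∈ X, x ≠ p ∧ |x - p| < ε) :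
    {r : ℝ | ∀ ε : ℝ, 0 < ε → ∃ x ∈ X, x ≠ r ∧ |x - r| < ε}.Countable ∧
      {r : ℝ | ∀ ε : ℝ, 0 < ε → ∃ x ∈ X, x ≠ r ∧ |x - r| < ε}.Infinite := by
  set A := {r : ℝ | ∀ ε : ℝ, 0 < ε → ∃ x ∈ X, x ≠ r ∧ |x - r| < ε} with hAdef
  -- Lemma L : no point is a limit of X from below
  have L : ∀ r : ℝ, ∃ δ : ℝ, 0 < δ ∧ ∀ x ∈ X, ¬(r - δ < x ∧ x < r) := by
    intro r
    by_cases h : (X ∩ Set.Iio r).Nonempty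
    · obtain ⟨m, ⟨hmX, hmlt⟩, hmax⟩ := hdwo (X ∩ Set.Iio r) Set.inter_subset_left h
      refine ⟨r - m, by simp only [Set.mem_Iio] at hmlt; linarith, ?_⟩
      rintro x hx ⟨h1, h2⟩
      have := hmax x ⟨hx, h2⟩
      simp only [Set.mem_Iio] at hmlt
      linarith
    · refine ⟨1, one_pos, ?_⟩
      rintro x hx ⟨h1, h2⟩
      exact h ⟨x, hx, h2⟩
  -- same for A
  have LA : ∀ r : ℝ, ∃ δ : ℝ, 0 < δ ∧ ∀ b ∈ A, ¬(r - δ < b ∧ b < r) := by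
    intro a
    obtain ⟨δ, hδ, hL⟩ := L a
    refine ⟨δ, hδ, ?_⟩
    rintro b hb ⟨h1, h2⟩
    have hε : (0:ℝ) < min (a - b) (b - (a - δ)) := by
      apply lt_min <;> linarith
    obtain ⟨x, hxX, hxne, hxd⟩ := hb _ hε
    rw [abs_lt] at hxd
    have h3 := min_le_left (a - b) (b - (a - δ))
    have h4 := min_le_right (a - b) (b - (a - δ))
    exact hL x hxX ⟨by linarith [hxd.1], by linarith [hxd.2]⟩
  constructor
  · -- countability
    choose δ hδ hsep using LA
    have hq : ∀ a : ℝ, ∃ q : ℚ, a - δ a < (q:ℝ) ∧ (q:ℝ) < a := fun a =>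
      exists_rat_btwn (by linarith [hδ a])
    choose f hf1 hf2 using hq
    have key : ∀ a ∈ A, ∀ b ∈ A, a < b → (f a : ℝ) < (f b : ℝ) := by
      intro a ha b hb hab
      have : ¬(b - δ b < a ∧ a < b) := hsep b a ha
      have hle : a ≤ b - δ b := by
        by_contra h
        push_neg at h
        exact this ⟨h, hab⟩
      calc (f a : ℝ) < a := hf2 a
        _ ≤ b - δ b := hle
        _ < (f b : ℝ) := hf1 b
    have hinj : Set.InjOn f A := by
      intro a ha b hb hfeq
      rcases lt_trichotomy a b with h | h | h
      · exact absurd (congrArg (Rat.cast : ℚ → ℝ) hfeq) (ne_of_lt (key a ha b hb h))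
      · exact h
      · exact absurd (congrArg (Rat.cast : ℚ → ℝ) hfeq) (ne_of_gt (key b hb a ha h))
    exact Set.countable_iff_exists_injOn.2
      ⟨fun a => Encodable.encode (f a),
        fun a ha b hb h => hinj ha hb (Encodable.encode_injective h)⟩
  · -- infiniteness: powers of p are accumulation points
    have hmemX : ∀ n : ℕ, ∀ x ∈ X, x * p ^ n ∈ X := by
      intro n
      induction n with
      | zero => simpa using fun x hx => hx
      | succ k ih =>
        intro x hx
        rw [pow_succ, ← mul_assoc]
        exact hmul _ (ih _ hx) _ hpX
    have hmem : ∀ n : ℕ, p ^ (n + 1) ∈ A := by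
      intro n ε hε
      have hpn : (0:ℝ) < p ^ n := pow_pos hp0 n
      obtain ⟨x, hxX, hxne, hxd⟩ := hacc (ε / p ^ n) (by positivity)
      refine ⟨x * p ^ n, hmemX n x hxX, ?_, ?_⟩
      · intro h
        rw [pow_succ'] at h
        exact hxne (mul_right_cancel₀ (ne_of_gt hpn) h)
      · have : x * p ^ n - p ^ (n + 1) = (x - p) * p ^ n := by ring
        rw [this, abs_mul, abs_of_pos hpn]
        calc |x - p| * p ^ n < (ε / p ^ n) * p ^ n := by
              exact mul_lt_mul_of_pos_right hxd hpn
          _ = ε := div_mul_cancel₀ ε (ne_of_gt hpn)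
    have hinj : Function.Injective (fun n : ℕ => p ^ (n + 1)) := by
      intro m n h
      simp only at h
      have hsa : StrictAnti (fun n : ℕ => p ^ n) := fun a b hab =>
        pow_lt_pow_right_of_lt_one₀ hp0 hp1 hab
      have := hsa.injective h
      omega
    exact Set.infinite_of_injective_forall_mem hinj hmem
end

section
/- For every finite lattice L, the congruence density of L satisfies cd(L) ≤ 2^(−|Jr L|), where Jr L is the set of join-reducible elements (elements with more than one lower cover) of L. Dually, cd(L) ≤ 2^(−|Mr L|), where Mr L is the set of meet-reducible elements. -/
/-- A congruence of a lattice: an equivalence relation compatible with `⊔` and `⊓`. -/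
structure LatCon (L : Type) [Lattice L] : Type where
  r : L → L → Prop
  refl : ∀ a, r a a
  symm : ∀ {a b}, r a b → r b a
  trans : ∀ {a b c}, r a b → r b c → r a c
  sup : ∀ {a b c d}, r a b → r c d → r (a ⊔ c) (b ⊔ d)
  inf : ∀ {a b c d}, r a b → r c d → r (a ⊓ c) (b ⊓ d)

/-- The congruence density of a finite lattice `L`: the number of congruences of `L`
divided by `2 ^ (|L| - 1)`. -/
noncomputable def latCd (L : Type) [Lattice L] : ℝ :=
  (Nat.card (LatCon L) : ℝ) / 2 ^ (Nat.card L - 1)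

/-- The set of join-reducible elements: elements with at least two lower covers. -/
def Jr (L : Type) [Lattice L] : Set L := {x | ∃ y z, y ⋖ x ∧ z ⋖ x ∧ y ≠ z}

/-- The set of meet-reducible elements: elements with at least two upper covers. -/
def Mr (L : Type) [Lattice L] : Set L := {x | ∃ y z, x ⋖ y ∧ x ⋖ z ∧ y ≠ z}

/-- The set of join-irreducible elements: exactly one lower cover. -/
def JirS (L : Type) [Lattice L] : Set L := {x | ∃ y, y ⋖ x ∧ ∀ z, z ⋖ x → z = y}

section Lemmas

variable {L : Type} [Lattice L]

lemma latCon_ext {θ θ' : LatCon L} (h : θ.r = θ'.r) : θ = θ' := by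
  cases θ; cases θ'; cases h; rfl

lemma latCon_r_iff_inf_sup (θ : LatCon L) (a b : L) :
    θ.r a b ↔ θ.r (a ⊓ b) (a ⊔ b) := by
  have hup : ∀ c, a ⊓ b ≤ c → c ≤ a ⊔ b → θ.r (a ⊓ b) (a ⊔ b) → θ.r c (a ⊔ b) := by
    intro c h1 h2 h
    have := θ.sup (θ.refl c) h
    rwa [sup_eq_left.2 h1, sup_eq_right.2 h2] at this
  constructor
  · intro h
    have h1 : θ.r (a ⊓ b) b := by simpa using θ.inf h (θ.refl b)
    have h2 : θ.r (a ⊔ b) b := by simpa using θ.sup h (θ.refl b)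
    exact θ.trans h1 (θ.symm h2)
  · intro h
    exact θ.trans (hup a inf_le_left le_sup_left h)
      (θ.symm (hup b inf_le_right le_sup_right h))

lemma latCon_collapse_cover (θ : LatCon L) {a b u v : L} (h : θ.r a b)
    (hau : a ≤ u) (huv : u ⋖ v) (hvb : v ≤ b) : θ.r u v := by
  have h1 : θ.r (u ⊔ a) (u ⊔ b) := θ.sup (θ.refl u) h
  rw [sup_eq_left.2 hau] at h1
  have h2 : θ.r (u ⊓ v) ((u ⊔ b) ⊓ v) := θ.inf h1 (θ.refl v)
  rwa [inf_eq_left.2 huv.le, inf_eq_right.2 (hvb.trans le_sup_right)] at h2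

variable [Finite L]

lemma latCon_r_of_covers (θ : LatCon L) {a b : L} (hab : a ≤ b)
    (h : ∀ u v, a ≤ u → u ⋖ v → v ≤ b → θ.r u v) : θ.r a b := by
  have wf : WellFoundedGT L := inferInstance
  induction a using WellFoundedGT.induction with
  | _ a ih =>
    rcases eq_or_lt_of_le hab with rfl | hlt
    · exact θ.refl a
    · obtain ⟨w, haw, hwb⟩ := exists_covBy_le_of_lt hlt
      exact θ.trans (h a w le_rfl haw hwb)
        (ih w haw.lt hwb fun u v hwu huv hvb => h u v (haw.le.trans hwu) huv hvb)

lemma cover_jir {u v : L} (huv : u ⋖ v) :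
    ∃ j, j ∈ JirS L ∧ ∀ θ : LatCon L, (θ.r u v ↔ ∀ z, z ⋖ j → θ.r z j) := by
  have wf : WellFoundedLT L := inferInstance
  obtain ⟨j, hj, hjmin⟩ := wf.wf.has_min {x | x ≤ v ∧ ¬ x ≤ u} ⟨v, le_rfl, fun h => huv.lt.not_ge h⟩
  obtain ⟨hjv, hju⟩ := hj
  -- every element strictly below j is ≤ u ⊓ j
  have hbelow : ∀ x, x < j → x ≤ u ⊓ j := by
    intro x hx
    refine le_inf ?_ hx.le
    by_contra hxu
    exact hjmin x ⟨hx.le.trans hjv, hxu⟩ hx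
  have hujlt : u ⊓ j < j := lt_of_le_of_ne inf_le_right (fun h => hju (h ▸ inf_le_left))
  have hcov : u ⊓ j ⋖ j := ⟨hujlt, fun c h1 h2 => h1.not_ge (hbelow c h2)⟩
  have huniq : ∀ z, z ⋖ j → z = u ⊓ j := by
    intro z hz
    rcases (hbelow z hz.lt).lt_or_eq with hlt | heq
    · exact absurd hujlt (hz.2 hlt)
    · exact heq
  refine ⟨j, ⟨u ⊓ j, hcov, huniq⟩, fun θ => ⟨fun h z hz => ?_, fun h => ?_⟩⟩
  · rw [huniq z hz]
    have := θ.inf h (θ.refl j)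
    rwa [inf_eq_right.2 hjv] at this
  · have hj' : θ.r (u ⊓ j) j := h (u ⊓ j) hcov
    have h2 := θ.sup (θ.refl u) hj'
    rw [sup_inf_self] at h2
    have hlt : u < u ⊔ j := left_lt_sup.2 hju
    have hv : u ⊔ j = v := ((sup_le huv.le hjv).lt_or_eq).resolve_left (huv.2 hlt)
    rwa [hv] at h2


lemma latCon_injective :
    Function.Injective (fun (θ : LatCon L) (j : JirS L) => ∀ z, z ⋖ j.val → θ.r z j.val) := by
  intro θ θ' h
  have hcover : ∀ u v : L, u ⋖ v → (θ.r u v ↔ θ'.r u v) := by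
    intro u v huv
    obtain ⟨j, hj, hiff⟩ := cover_jir huv
    rw [hiff θ, hiff θ']
    exact iff_of_eq (congrFun h ⟨j, hj⟩)
  have hle : ∀ a b : L, a ≤ b → (θ.r a b ↔ θ'.r a b) := by
    intro a b hab
    constructor
    · intro hr
      exact latCon_r_of_covers θ' hab fun u v hau huv hvb =>
        (hcover u v huv).1 (latCon_collapse_cover θ hr hau huv hvb)
    · intro hr
      exact latCon_r_of_covers θ hab fun u v hau huv hvb =>
        (hcover u v huv).2 (latCon_collapse_cover θ' hr hau huv hvb)
  apply latCon_ext
  funext a b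
  exact propext ((latCon_r_iff_inf_sup θ a b).trans
    ((hle _ _ inf_le_sup).trans (latCon_r_iff_inf_sup θ' a b).symm))

lemma card_latCon_le : Nat.card (LatCon L) ≤ 2 ^ Nat.card (JirS L) :=
  calc Nat.card (LatCon L) ≤ Nat.card (↥(JirS L) → Prop) :=
        Nat.card_le_card_of_injective _ latCon_injective
    _ = Nat.card Prop ^ Nat.card (JirS L) := Nat.card_fun
    _ = 2 ^ Nat.card (JirS L) := by rw [Nat.card_eq_fintype_card, Fintype.card_prop]

lemma card_partition [Nonempty L] :
    Nat.card L = 1 + Nat.card (JirS L) + Nat.card (Jr L) := by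
  classical
  cases nonempty_fintype L
  set m : L := Finset.univ.inf' Finset.univ_nonempty id with hm
  have hmle : ∀ x : L, m ≤ x := fun x => Finset.inf'_le id (Finset.mem_univ x)
  have hnocov : ∀ z, ¬ z ⋖ m := fun z hz => hz.lt.not_ge (hmle z)
  have hsplit : (Set.univ : Set L) = insert m (JirS L ∪ Jr L) := by
    ext x
    simp only [Set.mem_univ, true_iff, Set.mem_insert_iff, Set.mem_union]
    by_cases hx : x = m
    · exact Or.inl hx
    right
    have hlt : m < x := (hmle x).lt_of_ne (Ne.symm hx)
    obtain ⟨z, -, hz⟩ := exists_le_covBy_of_lt hlt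
    by_cases huniq : ∀ w, w ⋖ x → w = z
    · exact Or.inl ⟨z, hz, huniq⟩
    · push_neg at huniq
      obtain ⟨w, hw, hne⟩ := huniq
      exact Or.inr ⟨w, z, hw, hz, hne⟩
  have hdis : Disjoint (JirS L) (Jr L) := by
    rw [Set.disjoint_left]
    rintro x ⟨y, hy, hyu⟩ ⟨a, b, ha, hb, hne⟩
    exact hne ((hyu a ha).trans (hyu b hb).symm)
  have hmnot : m ∉ JirS L ∪ Jr L := by
    rintro (⟨y, hy, -⟩ | ⟨a, b, ha, -⟩)
    · exact hnocov y hy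
    · exact hnocov a ha
  have h1 : Nat.card L = (Set.univ : Set L).ncard := (Set.ncard_univ L).symm
  rw [h1, hsplit, Set.ncard_insert_of_notMem hmnot, Set.ncard_union_eq hdis,
    ← Nat.card_coe_set_eq, ← Nat.card_coe_set_eq]
  omega

end Lemmas

theorem latCd_le_jr (L : Type) [Lattice L] [Finite L] :
    latCd L ≤ (2 : ℝ) ^ (-(Nat.card (Jr L) : ℤ)) := by
  rcases isEmpty_or_nonempty L with hL | hL
  · have hJr : Nat.card (Jr L) = 0 := Nat.card_of_isEmpty
    have hcon : Nat.card (LatCon L) = 1 := by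
      rw [Nat.card_eq_one_iff_unique]
      constructor
      · constructor
        intro θ θ'
        apply latCon_ext
        funext a
        exact isEmptyElim a
      · exact ⟨⟨fun _ _ => True, fun _ => trivial, fun _ => trivial, fun _ _ => trivial,
          fun _ _ => trivial, fun _ _ => trivial⟩⟩
    unfold latCd
    rw [hcon, hJr, Nat.card_of_isEmpty]
    norm_num
  · have hcard := card_partition (L := L)
    have hn1 : Nat.card L - 1 = Nat.card (JirS L) + Nat.card (Jr L) := by omega
    have hc : (Nat.card (LatCon L) : ℝ) ≤ 2 ^ Nat.card (JirS L) := by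
      exact_mod_cast card_latCon_le
    unfold latCd
    rw [hn1, zpow_neg, zpow_natCast, pow_add, div_le_iff₀ (by positivity)]
    calc (Nat.card (LatCon L) : ℝ) ≤ 2 ^ Nat.card (JirS L) := hc
      _ = ((2:ℝ) ^ Nat.card (Jr L))⁻¹ * (2 ^ Nat.card (JirS L) * 2 ^ Nat.card (Jr L)) := by
          rw [mul_comm ((2:ℝ) ^ Nat.card (JirS L)), ← mul_assoc,
            inv_mul_cancel₀ (by positivity), one_mul]

def latConDualEquiv (L : Type) [Lattice L] : LatCon (Lᵒᵈ) ≃ LatCon L where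
  toFun θ := ⟨fun a b => θ.r (OrderDual.toDual a) (OrderDual.toDual b), fun a => θ.refl _,
    fun h => θ.symm h, fun h1 h2 => θ.trans h1 h2,
    fun h1 h2 => θ.inf h1 h2, fun h1 h2 => θ.sup h1 h2⟩
  invFun θ := ⟨fun a b => θ.r (OrderDual.ofDual a) (OrderDual.ofDual b), fun a => θ.refl _,
    fun h => θ.symm h, fun h1 h2 => θ.trans h1 h2,
    fun h1 h2 => θ.inf h1 h2, fun h1 h2 => θ.sup h1 h2⟩
  left_inv θ := latCon_ext rfl
  right_inv θ := latCon_ext rfl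

/-- For a finite lattice `L`, `cd L ≤ 2 ^ (−|Jr L|)` and, dually, `cd L ≤ 2 ^ (−|Mr L|)`. -/
theorem latCd_le_of_reducibles (L : Type) [Lattice L] [Finite L] :
    latCd L ≤ (2 : ℝ) ^ (-(Nat.card (Jr L) : ℤ)) ∧
      latCd L ≤ (2 : ℝ) ^ (-(Nat.card (Mr L) : ℤ)) := by
  haveI : Finite (Lᵒᵈ) := ‹Finite L›
  refine ⟨latCd_le_jr L, ?_⟩
  have hdual : latCd (Lᵒᵈ) = latCd L := by
    unfold latCd
    rw [Nat.card_congr (latConDualEquiv L), Nat.card_congr (OrderDual.ofDual (α := L))]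
  have hJrMr : Nat.card (Jr (Lᵒᵈ)) = Nat.card (Mr L) := by
    refine Nat.card_congr (Equiv.subtypeEquiv (OrderDual.ofDual (α := L)) fun x => ?_)
    constructor
    · rintro ⟨y, z, hy, hz, hne⟩
      exact ⟨OrderDual.ofDual y, OrderDual.ofDual z, hy.ofDual, hz.ofDual,
        fun h => hne (OrderDual.ofDual.injective h)⟩
    · rintro ⟨y, z, hy, hz, hne⟩
      exact ⟨OrderDual.toDual y, OrderDual.toDual z, hy.toDual, hz.toDual,
        fun h => hne (OrderDual.toDual.injective h)⟩
  have := latCd_le_jr (Lᵒᵈ)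
  rwa [hdual, hJrMr] at this
end

section
/- For finite lattices L₁, ..., L_t, the congruence density of the glued sum L₁ +̇ ⋯ +̇ L_t equals the product cd(L₁)⋯cd(L_t). -/
/-- The glued sum `L 0 +̇ L 1 +̇ ⋯ +̇ L (t-1)`, realized as the sublattice of the direct
product consisting of the tuples that are `⊤` before some pivot coordinate and `⊥` after
it. -/
def gluedSumSublatticeN {t : ℕ} (F : Fin t → Type) [∀ i, Lattice (F i)]
    [∀ i, BoundedOrder (F i)] : Sublattice (∀ i, F i) where
  carrier := {p | ∃ k : Fin t, (∀ i, i < k → p i = ⊤) ∧ ∀ i, k < i → p i = ⊥}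
  supClosed' := by
    rintro p ⟨k, hk1, hk2⟩ q ⟨l, hl1, hl2⟩
    refine ⟨max k l, fun i hi => ?_, fun i hi => ?_⟩
    · show p i ⊔ q i = ⊤
      rcases lt_max_iff.mp hi with h | h
      · rw [hk1 i h, top_sup_eq]
      · rw [hl1 i h, sup_top_eq]
    · show p i ⊔ q i = ⊥
      rw [hk2 i (lt_of_le_of_lt (le_max_left k l) hi),
        hl2 i (lt_of_le_of_lt (le_max_right k l) hi), sup_idem]
  infClosed' := by
    rintro p ⟨k, hk1, hk2⟩ q ⟨l, hl1, hl2⟩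
    refine ⟨min k l, fun i hi => ?_, fun i hi => ?_⟩
    · show p i ⊓ q i = ⊤
      rw [hk1 i (lt_of_lt_of_le hi (min_le_left k l)),
        hl1 i (lt_of_lt_of_le hi (min_le_right k l)), inf_idem]
    · show p i ⊓ q i = ⊥
      rcases min_lt_iff.mp hi with h | h
      · rw [hk2 i h, bot_inf_eq]
      · rw [hl2 i h, inf_bot_eq]

/-- The glued sum of the finite family `L 0, …, L (t-1)` of bounded lattices. -/
def GluedSumN {t : ℕ} (F : Fin t → Type) [∀ i, Lattice (F i)] [∀ i, BoundedOrder (F i)] :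
    Type := gluedSumSublatticeN F

instance {t : ℕ} (F : Fin t → Type) [∀ i, Lattice (F i)] [∀ i, BoundedOrder (F i)] :
    Lattice (GluedSumN F) :=
  inferInstanceAs (Lattice (gluedSumSublatticeN F))

/-!
The glued sum `L` is the union of the consecutive intervals `[bᵢ, bᵢ₊₁] ≅ Lᵢ`, where
`bᵢ₊₁` is the top of `Lᵢ` glued to the bottom of `Lᵢ₊₁`. The clamp `p ↦ (p ⊔ bᵢ) ⊓ bᵢ₊₁` onto
the `i`-th interval is a lattice polynomial, so every congruence of `L` is determined by its
restrictions to the summands; conversely a family of congruences of the summands extends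
componentwise. Hence `Con L ≃ ∏ Con Lᵢ`, and since `|L| - 1 = ∑ (|Lᵢ| - 1)` the densities
multiply.
-/

namespace LatCon

variable {α β : Type} [Lattice α] [Lattice β]

theorem ext {Θ Θ' : LatCon α} (h : ∀ a b, Θ.r a b ↔ Θ'.r a b) : Θ = Θ' := by
  obtain ⟨r⟩ := Θ
  obtain ⟨r'⟩ := Θ'
  obtain rfl : r = r' := funext₂ fun a b => propext (h a b)
  rfl

def comap (f : LatticeHom α β) (Θ : LatCon β) : LatCon α where
  r a b := Θ.r (f a) (f b)
  refl _ := Θ.refl _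
  symm := Θ.symm
  trans := Θ.trans
  sup h h' := by simpa only [map_sup] using Θ.sup h h'
  inf h h' := by simpa only [map_inf] using Θ.inf h h'

def pi {ι : Type} {F : ι → Type} [∀ i, Lattice (F i)] (θ : ∀ i, LatCon (F i)) :
    LatCon (∀ i, F i) where
  r p q := ∀ i, (θ i).r (p i) (q i)
  refl _ _ := (θ _).refl _
  symm h i := (θ i).symm (h i)
  trans h h' i := (θ i).trans (h i) (h' i)
  sup h h' i := (θ i).sup (h i) (h' i)
  inf h h' i := (θ i).inf (h i) (h' i)

theorem rel_of_reflTransGen {ι : Type*} (Θ : LatCon α) {f : ι → α} {i j : ι}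
    (h : Relation.ReflTransGen (fun i j => Θ.r (f i) (f j)) i j) : Θ.r (f i) (f j) := by
  induction h with
  | refl => exact Θ.refl _
  | tail _ hstep ih => exact Θ.trans ih hstep

end LatCon

namespace GluedSumN

variable {t : ℕ} {F : Fin t → Type} [∀ i, Lattice (F i)] [∀ i, BoundedOrder (F i)]

theorem val_sup (p q : GluedSumN F) : (p ⊔ q).1 = p.1 ⊔ q.1 := rfl

theorem val_inf (p q : GluedSumN F) : (p ⊓ q).1 = p.1 ⊓ q.1 := rfl

/-- The embedding of the summand `F k` into the glued sum. -/
noncomputable def single (k : Fin t) : LatticeHom (F k) (GluedSumN F) where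
  toFun a := ⟨Function.update (fun i => if i < k then ⊤ else ⊥) k a, k,
    fun i hi => by simp [Function.update_of_ne hi.ne, hi],
    fun i hi => by simp [Function.update_of_ne hi.ne', hi.not_gt]⟩
  map_sup' _ _ := Subtype.ext (Function.update_sup _ _ _ _)
  map_inf' a b := Subtype.ext (Function.update_inf (fun i => if i < k then ⊤ else ⊥) k a b)

theorem single_val (k : Fin t) (a : F k) :
    (single k a).1 = Function.update (fun i => if i < k then ⊤ else ⊥) k a :=
  rfl

theorem single_val_self (k : Fin t) (a : F k) : (single k a).1 k = a := by
  rw [single_val, Function.update_self]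

theorem single_val_of_lt {k i : Fin t} (a : F k) (h : i < k) : (single k a).1 i = ⊤ := by
  rw [single_val, Function.update_of_ne h.ne, if_pos h]

theorem single_val_of_gt {k i : Fin t} (a : F k) (h : k < i) : (single k a).1 i = ⊥ := by
  rw [single_val, Function.update_of_ne h.ne', if_neg h.not_gt]

theorem single_injective (k : Fin t) : Function.Injective (single (F := F) k) := fun a b h => by
  rw [← single_val_self k a, h, single_val_self]

theorem eq_single_of_pivot {p : GluedSumN F} {k : Fin t} (htop : ∀ i < k, p.1 i = ⊤)
    (hbot : ∀ i, k < i → p.1 i = ⊥) : p = single k (p.1 k) := by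
  refine Subtype.ext (funext fun i => ?_)
  rcases lt_trichotomy i k with h | rfl | h
  · rw [single_val_of_lt _ h, htop i h]
  · rw [single_val_self]
  · rw [single_val_of_gt _ h, hbot i h]

theorem single_top_eq_single_bot {i j : Fin t} (h : i ⋖ j) :
    single i (⊤ : F i) = single j ⊥ := by
  refine Subtype.ext (funext fun m => ?_)
  rcases lt_trichotomy m i with hm | rfl | hm
  · rw [single_val_of_lt _ hm, single_val_of_lt _ (hm.trans h.lt)]
  · rw [single_val_self, single_val_of_lt _ h.lt]
  · obtain rfl | hjm := (not_lt.1 fun hmj => h.2 hm hmj).eq_or_lt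
    · rw [single_val_of_gt _ hm, single_val_self]
    · rw [single_val_of_gt _ hm, single_val_of_gt _ hjm]

theorem single_val_eq_sup_inf (p : GluedSumN F) (k : Fin t) :
    single k (p.1 k) = (p ⊔ single k ⊥) ⊓ single k ⊤ := by
  refine Subtype.ext (funext fun i => ?_)
  rw [val_inf, val_sup, Pi.inf_apply, Pi.sup_apply]
  rcases lt_trichotomy i k with h | rfl | h
  · simp only [single_val_of_lt _ h, sup_top_eq, inf_top_eq]
  · simp only [single_val_self, sup_bot_eq, inf_top_eq]
  · simp only [single_val_of_gt _ h, sup_bot_eq, inf_bot_eq]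

theorem eq_top_of_single_eq_single {i j : Fin t} {a : F i} {b : F j}
    (h : single i a = single j b) (hij : i < j) : a = ⊤ := by
  rw [← single_val_self i a, h, single_val_of_lt _ hij]

end GluedSumN

namespace LatCon

open GluedSumN

variable {t : ℕ} {F : Fin t → Type} [∀ i, Lattice (F i)] [∀ i, BoundedOrder (F i)]

theorem rel_single_of_rel (Θ : LatCon (GluedSumN F)) {p q : GluedSumN F} (h : Θ.r p q)
    (i : Fin t) : Θ.r (single i (p.1 i)) (single i (q.1 i)) := by
  rw [single_val_eq_sup_inf p, single_val_eq_sup_inf q]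
  exact Θ.inf (Θ.sup h (Θ.refl _)) (Θ.refl _)

theorem rel_of_forall_rel_single_of_le (Θ : LatCon (GluedSumN F)) {p q : GluedSumN F}
    {k l : Fin t} (hp_top : ∀ i < k, p.1 i = ⊤) (hp_bot : ∀ i, k < i → p.1 i = ⊥)
    (hq_top : ∀ i < l, q.1 i = ⊤) (hq_bot : ∀ i, l < i → q.1 i = ⊥) (hkl : k ≤ l)
    (H : ∀ i, Θ.r (single i (p.1 i)) (single i (q.1 i))) : Θ.r p q := by
  -- for `k ≤ i < l`, `single i ⊤ = single (i + 1) ⊥` links `H i` to `H (i + 1)`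
  have step : ∀ i ∈ Set.Ico k l,
      Θ.r (single i (q.1 i)) (single (Order.succ i) (q.1 (Order.succ i))) := by
    rintro i ⟨hki, hil⟩
    have hcov : i ⋖ Order.succ i := Order.covBy_succ_of_not_isMax (not_isMax_of_lt hil)
    rw [hq_top i hil, single_top_eq_single_bot hcov, ← hp_bot _ (hki.trans_lt hcov.lt)]
    exact H _
  have chain : Θ.r (single k (q.1 k)) (single l (q.1 l)) :=
    rel_of_reflTransGen Θ (reflTransGen_of_succ_of_le _ step hkl)
  rw [eq_single_of_pivot hp_top hp_bot, eq_single_of_pivot hq_top hq_bot]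
  exact Θ.trans (H k) chain

theorem rel_iff_forall_rel_single (Θ : LatCon (GluedSumN F)) (p q : GluedSumN F) :
    Θ.r p q ↔ ∀ i, Θ.r (single i (p.1 i)) (single i (q.1 i)) := by
  refine ⟨rel_single_of_rel Θ, fun H => ?_⟩
  obtain ⟨k, hp_top, hp_bot⟩ := p.2
  obtain ⟨l, hq_top, hq_bot⟩ := q.2
  rcases le_total k l with hkl | hlk
  · exact rel_of_forall_rel_single_of_le Θ hp_top hp_bot hq_top hq_bot hkl H
  · exact Θ.symm <| rel_of_forall_rel_single_of_le Θ hq_top hq_bot hp_top hp_bot hlk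
      fun i => Θ.symm (H i)

theorem forall_rel_single_val_iff (θ : ∀ i, LatCon (F i)) (k : Fin t) (a b : F k) :
    (∀ i, (θ i).r ((single k a).1 i) ((single k b).1 i)) ↔ (θ k).r a b := by
  refine ⟨fun h => by simpa only [single_val_self] using h k, fun h i => ?_⟩
  rcases lt_trichotomy i k with hi | rfl | hi
  · rw [single_val_of_lt a hi, single_val_of_lt b hi]
    exact (θ i).refl _
  · rwa [single_val_self, single_val_self]
  · rw [single_val_of_gt a hi, single_val_of_gt b hi]
    exact (θ i).refl _

noncomputable def gluedSumEquiv : LatCon (GluedSumN F) ≃ ∀ i, LatCon (F i) where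
  toFun Θ i := Θ.comap (single i)
  invFun θ := (pi θ).comap (gluedSumSublatticeN F).subtype
  left_inv Θ := ext fun p q => (rel_iff_forall_rel_single Θ p q).symm
  right_inv θ := funext fun k => ext fun a b => forall_rel_single_val_iff θ k a b

theorem card_gluedSum :
    Nat.card (LatCon (GluedSumN F)) = ∏ i, Nat.card (LatCon (F i)) := by
  rw [Nat.card_congr gluedSumEquiv, Nat.card_pi]

end LatCon

namespace GluedSumN

section Succ

variable {n : ℕ} {F : Fin (n + 1) → Type} [∀ i, Lattice (F i)] [∀ i, BoundedOrder (F i)]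

theorem single_last_top_val (i : Fin (n + 1)) : (single (Fin.last n) (⊤ : F _)).1 i = ⊤ := by
  rcases (Fin.le_last i).lt_or_eq with h | rfl
  · exact single_val_of_lt _ h
  · exact single_val_self _ _

/-- Every element other than the top is `single i a` for a unique `i` and a unique `a ≠ ⊤`. -/
noncomputable def ofOption : Option (Σ i, {a : F i // a ≠ ⊤}) → GluedSumN F
  | none => single (Fin.last n) ⊤
  | some s => single s.1 s.2.1

theorem ofOption_injective : Function.Injective (ofOption (F := F)) := by
  have top_ne (i : Fin (n + 1)) (a : F i) (ha : a ≠ ⊤) : single (Fin.last n) ⊤ ≠ single i a :=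
    fun h => ha (by rw [← single_val_self i a, ← h, single_last_top_val])
  rintro (_ | ⟨i, a, ha⟩) (_ | ⟨j, b, hb⟩) h
  · rfl
  · exact absurd h (top_ne j b hb)
  · exact absurd h.symm (top_ne i a ha)
  · rcases lt_trichotomy i j with hij | rfl | hij
    · exact absurd (eq_top_of_single_eq_single h hij) ha
    · obtain rfl := single_injective i h
      rfl
    · exact absurd (eq_top_of_single_eq_single h.symm hij) hb

theorem ofOption_surjective : Function.Surjective (ofOption (F := F)) := by
  intro p
  obtain ⟨k, hk_top, hk_bot⟩ := p.2
  by_cases htop : ∀ i, p.1 i = ⊤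
  · refine ⟨none, Eq.symm ?_⟩
    rw [eq_single_of_pivot (k := Fin.last n) (fun i _ => htop i)
      (fun i hi => absurd hi (Fin.le_last i).not_gt), htop]
    rfl
  · push Not at htop
    obtain ⟨m, hm, hmin⟩ := wellFounded_lt.has_min {i | p.1 i ≠ ⊤} htop
    have hkm : k ≤ m := not_lt.1 fun h => hm (hk_top m h)
    exact ⟨some ⟨m, p.1 m, hm⟩, (eq_single_of_pivot (fun i hi => not_not.1 fun h => hmin i h hi)
      fun i hi => hk_bot i (hkm.trans_lt hi)).symm⟩

theorem card_eq_sum_add_one [∀ i, Finite (F i)] :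
    Nat.card (GluedSumN F) = ∑ i, (Nat.card (F i) - 1) + 1 := by
  classical
  rw [← Nat.card_eq_of_bijective _ ⟨ofOption_injective, ofOption_surjective⟩, Finite.card_option,
    Nat.card_sigma]
  congr 2 with i
  rw [← Nat.card_congr (Equiv.optionSubtypeNe (⊤ : F i)), Finite.card_option, Nat.add_sub_cancel]

end Succ

theorem card_sub_one {t : ℕ} {F : Fin t → Type} [∀ i, Lattice (F i)] [∀ i, BoundedOrder (F i)]
    [∀ i, Finite (F i)] : Nat.card (GluedSumN F) - 1 = ∑ i, (Nat.card (F i) - 1) := by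
  cases t with
  | zero =>
    have : IsEmpty (GluedSumN F) := ⟨fun ⟨_, k, _⟩ => k.elim0⟩
    simp
  | succ n => rw [card_eq_sum_add_one, Nat.add_sub_cancel]

end GluedSumN

/-- The congruence density of a glued sum `L 1 +̇ ⋯ +̇ L t` of finite lattices is the
product of the congruence densities `cd (L 1) ⋯ cd (L t)`. -/
theorem latCd_gluedSum (t : ℕ) (F : Fin t → Type) [∀ i, Lattice (F i)]
    [∀ i, BoundedOrder (F i)] [∀ i, Finite (F i)] :
    latCd (GluedSumN F) = ∏ i : Fin t, latCd (F i) := by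
  simp only [latCd, LatCon.card_gluedSum, GluedSumN.card_sub_one, Nat.cast_prod,
    ← Finset.prod_pow_eq_pow_sum, Finset.prod_div_distrib]
end

section
/- Let L be a finite lattice containing, as a sublattice, a copy of M_k (for k ≥ 3) with bottom u, top v and atoms a₁,...,a_k, such that u is covered (in L) by each a_i. Then cd(L) ≤ 2^(−k). -/
/-! Congruences of a lattice form a distributive lattice, and a finite distributive lattice of
length `m` has at most `2 ^ m` elements, so it suffices to show that `Con L` has length at most
`|L| - 1 - k`. The number of classes drops along a strict chain of congruences. Since `M_k` is
simple for `k ≥ 3`, a congruence either separates all `k + 2` elements of the copy or collapses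
all of them, and at the step where the copy collapses the number of classes drops by at least
`k + 1`. Hence the class count, plus `k` for congruences collapsing the copy, is a strictly
decreasing potential with values in `[k + 1, |L|]`. -/

theorem Function.Surjective.natCard_add_card_le {α β : Type*} [Finite α] {f : α → β}
    (hf : Function.Surjective f) {t : Finset α} (ht : ∀ x ∈ t, ∀ y ∈ t, f x = f y) :
    Nat.card β + t.card ≤ Nat.card α + 1 := by
  classical
  have : Fintype α := Fintype.ofFinite α
  have : Fintype β := @Fintype.ofFinite β (Finite.of_surjective f hf)
  rcases t.eq_empty_or_nonempty with rfl | ⟨x₀, hx₀⟩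
  · simpa using (Nat.card_le_card_of_surjective f hf).trans (Nat.le_succ _)
  have hsurj : Set.SurjOn f ↑(Finset.univ \ t) ↑(Finset.univ.erase (f x₀)) := fun b hb => by
    obtain ⟨x, rfl⟩ := hf b
    refine ⟨x, ?_, rfl⟩
    simp only [Finset.coe_sdiff, Finset.coe_univ, Set.mem_sdiff, Set.mem_univ, Finset.mem_coe,
      true_and]
    exact fun hx => (Finset.mem_erase.mp hb).1 (ht x hx x₀ hx₀)
  have := Finset.card_le_card_of_surjOn f hsurj
  rw [Finset.card_erase_of_mem (Finset.mem_univ _), Finset.card_univ_sdiff] at this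
  simp only [Nat.card_eq_fintype_card, Finset.card_univ] at this ⊢
  have := t.card_le_univ
  omega

theorem Fin.exists_ne_and_ne {k : ℕ} (hk : 3 ≤ k) (i j : Fin k) : ∃ l, l ≠ i ∧ l ≠ j := by
  classical
  obtain ⟨l, -, hl⟩ := Finset.exists_mem_notMem_of_card_lt_card (s := {i, j}) (t := Finset.univ)
    (by rw [Finset.card_univ, Fintype.card_fin]; exact (Finset.card_le_two).trans_lt hk)
  simp only [Finset.mem_insert, Finset.mem_singleton, not_or] at hl
  exact ⟨l, hl⟩

theorem LTSeries.length_le_of_strictAnti {α : Type*} [Preorder α] {f : α → ℕ} (hf : StrictAnti f)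
    {lo hi : ℕ} (hbound : ∀ x, f x ∈ Set.Icc lo hi) (p : LTSeries α) : p.length ≤ hi - lo := by
  have := Finset.card_le_card_of_injOn (s := Finset.univ) (t := Finset.Icc lo hi) (f ∘ p)
    (fun i _ => by simpa using hbound (p i)) (hf.comp_strictMono p.strictMono).injective.injOn
  simp only [Finset.card_univ, Fintype.card_fin, Nat.card_Icc] at this
  omega

section DistribLattice

variable {D : Type*} [DistribLattice D] [OrderBot D]

theorem IsAtom.eq_of_sup_eq_of_le_iff {a x y : D} (ha : IsAtom a) (hsup : x ⊔ a = y ⊔ a)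
    (hle : a ≤ x ↔ a ≤ y) : x = y := by
  refine eq_of_inf_eq_sup_eq ?_ hsup
  by_cases hax : a ≤ x
  · rw [inf_eq_right.mpr hax, inf_eq_right.mpr (hle.mp hax)]
  · rw [inf_comm, inf_comm y, disjoint_iff.mp (ha.not_le_iff_disjoint.mp hax),
      disjoint_iff.mp (ha.not_le_iff_disjoint.mp (hle.not.mp hax))]

theorem IsAtom.card_le_two_mul_card_Ici [Finite D] {a : D} (ha : IsAtom a) :
    Nat.card D ≤ 2 * Nat.card (Set.Ici a) := by
  have hinj : Function.Injective fun x : D => ((⟨x ⊔ a, le_sup_right⟩ : Set.Ici a), a ≤ x) :=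
    fun x y h => by
      simp only [Prod.mk.injEq, eq_iff_iff] at h
      exact ha.eq_of_sup_eq_of_le_iff (congrArg Subtype.val h.1) h.2
  have := Nat.card_le_card_of_injective _ hinj
  rwa [Nat.card_prod, Nat.card_eq_fintype_card (α := Prop), Fintype.card_prop, mul_comm] at this

/-- A finite distributive lattice of length `m` has at most `2 ^ m` elements: removing the part
below an atom `a` at most halves it and leaves `Set.Ici a`, which has length at most `m - 1`. -/
theorem card_le_two_pow_of_length_le [Finite D] {m : ℕ} (h : ∀ p : LTSeries D, p.length ≤ m) :
    Nat.card D ≤ 2 ^ m := by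
  induction m generalizing D with
  | zero =>
    suffices Subsingleton D by simp [Nat.card_unique]
    by_contra hD
    rw [not_subsingleton_iff_nontrivial] at hD
    obtain ⟨a, ha⟩ := IsAtomic.exists_atom (α := D)
    exact Nat.not_succ_le_zero 0 (h ((RelSeries.singleton _ a).cons ⊥ ha.bot_lt))
  | succ m ih =>
    rcases subsingleton_or_nontrivial D with hD | hD
    · simp [Nat.card_unique, Nat.one_le_two_pow]
    obtain ⟨a, ha⟩ := IsAtomic.exists_atom (α := D)
    have hIci : Nat.card (Set.Ici a) ≤ 2 ^ m := ih fun p => by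
      have := h ((p.map Subtype.val (Subtype.strictMono_coe _)).cons ⊥
        (ha.bot_lt.trans_le p.head.2))
      simpa [RelSeries.cons_length] using this
    calc Nat.card D ≤ 2 * Nat.card (Set.Ici a) := ha.card_le_two_mul_card_Ici
      _ ≤ 2 ^ (m + 1) := by rw [pow_succ']; exact Nat.mul_le_mul_left 2 hIci

end DistribLattice

namespace LatCon

variable {L : Type} [Lattice L]

protected theorem ext_s11 {θ φ : LatCon L} (h : ∀ x y, θ.r x y ↔ φ.r x y) : θ = φ := by
  obtain ⟨r, _⟩ := θ
  obtain ⟨s, _⟩ := φ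
  obtain rfl : r = s := funext₂ fun x y => propext (h x y)
  rfl

def toSetoid (θ : LatCon L) : Setoid L := ⟨θ.r, ⟨θ.refl, θ.symm, θ.trans⟩⟩

theorem toSetoid_injective : Function.Injective (toSetoid : LatCon L → Setoid L) :=
  fun _ _ h => LatCon.ext_s11 fun x y => Setoid.ext_iff.mp h x y

instance [Finite L] : Finite (LatCon L) :=
  Finite.of_injective LatCon.r fun _ _ h => LatCon.ext_s11 fun x y => by rw [h]

instance : PartialOrder (LatCon L) := PartialOrder.lift toSetoid toSetoid_injective

theorem le_def {θ φ : LatCon L} : θ ≤ φ ↔ ∀ x y, θ.r x y → φ.r x y :=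
  ⟨fun h _ _ => Setoid.le_def.mp h, fun h => Setoid.le_def.mpr (h _ _)⟩

theorem r_sup_right (θ : LatCon L) (c : L) {x y : L} (h : θ.r x y) : θ.r (x ⊔ c) (y ⊔ c) :=
  θ.sup h (θ.refl c)

theorem r_inf_right (θ : LatCon L) (c : L) {x y : L} (h : θ.r x y) : θ.r (x ⊓ c) (y ⊓ c) :=
  θ.inf h (θ.refl c)

theorem r_of_le_of_le (θ : LatCon L) {x y z : L} (h : θ.r x y) (hxz : x ≤ z) (hzy : z ≤ y) :
    θ.r x z := by
  simpa [inf_of_le_left hxz, inf_of_le_right hzy] using θ.r_inf_right z h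

theorem r_inf_sup_iff (θ : LatCon L) {x y : L} : θ.r (x ⊓ y) (x ⊔ y) ↔ θ.r x y := by
  refine ⟨fun h => θ.trans (θ.symm (θ.r_of_le_of_le h inf_le_left le_sup_left))
    (θ.r_of_le_of_le h inf_le_right le_sup_right), fun h => θ.trans (b := y) ?_ ?_⟩
  · simpa using θ.r_inf_right y h
  · simpa using θ.r_sup_right y (θ.symm h)

def meet (θ φ : LatCon L) : LatCon L where
  r x y := θ.r x y ∧ φ.r x y
  refl x := ⟨θ.refl x, φ.refl x⟩
  symm h := ⟨θ.symm h.1, φ.symm h.2⟩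
  trans h h' := ⟨θ.trans h.1 h'.1, φ.trans h.2 h'.2⟩
  sup h h' := ⟨θ.sup h.1 h'.1, φ.sup h.2 h'.2⟩
  inf h h' := ⟨θ.inf h.1 h'.1, φ.inf h.2 h'.2⟩

def joinRel (θ φ : LatCon L) : L → L → Prop :=
  Relation.ReflTransGen fun x y => θ.r x y ∨ φ.r x y

theorem joinRel_map (θ φ : LatCon L) {f : L → L}
    (hf : ∀ ψ : LatCon L, ∀ x y, ψ.r x y → ψ.r (f x) (f y)) {x y : L} (h : joinRel θ φ x y) : joinRel θ φ (f x) (f y) :=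
  Relation.ReflTransGen.lift f (fun _ _ => Or.imp (hf θ _ _) (hf φ _ _)) _ _ h

def join (θ φ : LatCon L) : LatCon L where
  r := joinRel θ φ
  refl _ := .refl
  symm h :=
    have : Std.Symm fun x y => θ.r x y ∨ φ.r x y := ⟨fun _ _ => Or.imp θ.symm φ.symm⟩
    Std.Symm.symm (r := Relation.ReflTransGen _) _ _ h
  trans := Relation.ReflTransGen.trans
  sup {x y c d} hxy hcd := by
    have h₁ := joinRel_map θ φ (fun ψ _ _ => ψ.r_sup_right c) hxy
    have h₂ := joinRel_map θ φ (fun ψ _ _ => ψ.r_sup_right y) hcd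
    simp only [sup_comm _ y] at h₂
    exact h₁.trans h₂
  inf {x y c d} hxy hcd := by
    have h₁ := joinRel_map θ φ (fun ψ _ _ => ψ.r_inf_right c) hxy
    have h₂ := joinRel_map θ φ (fun ψ _ _ => ψ.r_inf_right y) hcd
    simp only [inf_comm _ y] at h₂
    exact h₁.trans h₂

instance : Lattice (LatCon L) where
  sup := join
  inf := meet
  le_sup_left _ _ := le_def.mpr fun _ _ h => .single (.inl h)
  le_sup_right _ _ := le_def.mpr fun _ _ h => .single (.inr h)
  sup_le _ _ ψ hθ hφ := le_def.mpr fun _ _ h => by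
    induction h with
    | refl => exact ψ.refl _
    | tail _ hstep ih => exact ψ.trans ih (hstep.elim (le_def.mp hθ _ _) (le_def.mp hφ _ _))
  inf_le_left _ _ := le_def.mpr fun _ _ h => h.1
  inf_le_right _ _ := le_def.mpr fun _ _ h => h.2
  le_inf _ _ _ hφ hψ := le_def.mpr fun _ _ h => ⟨le_def.mp hφ _ _ h, le_def.mp hψ _ _ h⟩

/-- Funayama–Nakayama: clamping a `φ ∪ ψ`-chain from `p ⊓ q` to `p ⊔ q` into that interval, which
`θ` collapses, yields a `(θ ⊓ φ) ∪ (θ ⊓ ψ)`-chain. -/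
theorem inf_sup_le (θ φ ψ : LatCon L) : θ ⊓ (φ ⊔ ψ) ≤ θ ⊓ φ ⊔ θ ⊓ ψ := by
  refine le_def.mpr fun p q ⟨hθ, hφψ⟩ => (r_inf_sup_iff _).mp ?_
  set x := p ⊓ q
  set y := p ⊔ q
  have hxy : x ≤ y := inf_le_sup
  have hθ_clamp : ∀ z, θ.r x ((z ⊔ x) ⊓ y) := fun z =>
    θ.r_of_le_of_le ((r_inf_sup_iff θ).mpr hθ) (le_inf le_sup_right hxy) inf_le_right
  have hclamp := Relation.ReflTransGen.lift (fun z => (z ⊔ x) ⊓ y)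
    (p := fun z w => (θ ⊓ φ).r z w ∨ (θ ⊓ ψ).r z w) (fun z w hzw => ?_) _ _
    (show joinRel φ ψ x y from (r_inf_sup_iff (φ ⊔ ψ)).mpr hφψ)
  · simp only [Function.onFun, sup_idem, sup_of_le_left hxy, inf_of_le_left hxy, inf_idem] at hclamp
    exact hclamp
  · have hθzw := θ.trans (θ.symm (hθ_clamp z)) (hθ_clamp w)
    exact hzw.imp (fun h => ⟨hθzw, φ.r_inf_right y (φ.r_sup_right x h)⟩)
      (fun h => ⟨hθzw, ψ.r_inf_right y (ψ.r_sup_right x h)⟩)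

instance : DistribLattice (LatCon L) := DistribLattice.ofInfSupLe inf_sup_le

instance : OrderBot (LatCon L) where
  bot :=
    { r := Eq
      refl := fun _ => rfl
      symm := Eq.symm
      trans := Eq.trans
      sup := fun h h' => h ▸ h' ▸ rfl
      inf := fun h h' => h ▸ h' ▸ rfl }
  bot_le θ := le_def.mpr fun _ _ h => h ▸ θ.refl _

noncomputable def numClasses (θ : LatCon L) : ℕ := Nat.card (Quotient θ.toSetoid)

variable [Finite L] {θ φ : LatCon L}

theorem numClasses_pos [Nonempty L] : 0 < θ.numClasses :=
  have : Nonempty (Quotient θ.toSetoid) := .map (⟦·⟧) ‹_›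
  Nat.card_pos

theorem numClasses_le_card : θ.numClasses ≤ Nat.card L :=
  Nat.card_le_card_of_surjective _ Quotient.mk_surjective

theorem card_le_numClasses {t : Finset L} (ht : (t : Set L).Pairwise fun x y => ¬ θ.r x y) :
    t.card ≤ θ.numClasses := by
  rw [← Nat.card_eq_finsetCard]
  refine Nat.card_le_card_of_injective (fun x : t => (⟦x⟧ : Quotient θ.toSetoid)) fun x y h => ?_
  by_contra hxy
  exact ht x.2 y.2 (Subtype.coe_ne_coe.mpr hxy) (Quotient.exact h)

theorem numClasses_add_card_le_card {t : Finset L} (ht : ∀ x ∈ t, ∀ y ∈ t, θ.r x y) :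
    θ.numClasses + t.card ≤ Nat.card L + 1 :=
  Quotient.mk_surjective.natCard_add_card_le fun x hx y hy => Quotient.sound (ht x hx y hy)

theorem numClasses_add_card_le (hθφ : θ ≤ φ) {t : Finset L}
    (hθ : (t : Set L).Pairwise fun x y => ¬ θ.r x y) (hφ : ∀ x ∈ t, ∀ y ∈ t, φ.r x y) :
    φ.numClasses + t.card ≤ θ.numClasses + 1 := by
  classical
  let π : Quotient θ.toSetoid → Quotient φ.toSetoid := Quotient.map' id (le_def.mp hθφ)
  have hπ : Function.Surjective π := Quotient.ind fun x => ⟨⟦x⟧, rfl⟩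
  have hcard : (t.image fun x => (⟦x⟧ : Quotient θ.toSetoid)).card = t.card :=
    Finset.card_image_of_injOn fun x hx y hy h =>
      by_contra fun hxy => hθ hx hy hxy (Quotient.exact h)
  rw [← hcard]
  refine hπ.natCard_add_card_le ?_
  simp only [Finset.mem_image]
  rintro _ ⟨x, hx, rfl⟩ _ ⟨y, hy, rfl⟩
  exact Quotient.sound (hφ x hx y hy)

theorem numClasses_lt_of_lt (h : θ < φ) : φ.numClasses < θ.numClasses := by
  classical
  obtain ⟨x, y, hφxy, hθxy⟩ : ∃ x y, φ.r x y ∧ ¬ θ.r x y := by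
    by_contra! hle
    exact h.not_ge (le_def.mpr hle)
  have hxy : x ≠ y := by rintro rfl; exact hθxy (θ.refl x)
  have := numClasses_add_card_le h.le (t := {x, y})
    (by rw [Finset.coe_pair, Set.pairwise_pair]; exact fun _ => ⟨hθxy, fun h' => hθxy (θ.symm h')⟩)
    (by simp only [Finset.mem_insert, Finset.mem_singleton]
        rintro _ (rfl | rfl) _ (rfl | rfl)
        exacts [φ.refl _, hφxy, φ.symm hφxy, φ.refl _])
  rw [Finset.card_pair hxy] at this
  omega

end LatCon

def mkCarrier {L : Type*} [DecidableEq L] {k : ℕ} (u v : L) (a : Fin k → L) : Finset L :=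
  insert u (insert v (Finset.univ.image a))

@[simp]
theorem mem_mkCarrier {L : Type*} [DecidableEq L] {k : ℕ} {u v x : L} {a : Fin k → L} :
    x ∈ mkCarrier u v a ↔ x = u ∨ x = v ∨ ∃ i, a i = x := by
  simp [mkCarrier]

section Mk

variable {L : Type} [Lattice L] {k : ℕ}

structure IsMkCopy (u v : L) (a : Fin k → L) : Prop where
  bot_lt : ∀ i, u < a i
  sup_eq : ∀ i j, i ≠ j → a i ⊔ a j = v
  inf_eq : ∀ i j, i ≠ j → a i ⊓ a j = u

/-- Adding `k` once `θ` collapses the copy of `M_k` only partly compensates the `k + 1` classes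
lost at that step, so the potential still decreases strictly along chains. -/
noncomputable def mkPotential (u v : L) (k : ℕ) (θ : LatCon L) : ℕ :=
  θ.numClasses + open Classical in if θ.r u v then k else 0

namespace IsMkCopy

variable {u v : L} {a : Fin k → L}

theorem le_top (hM : IsMkCopy u v a) (hk : 2 ≤ k) (i : Fin k) : a i ≤ v := by
  have : Nontrivial (Fin k) := Fin.nontrivial_iff_two_le.mpr hk
  obtain ⟨j, hj⟩ := exists_ne i
  exact hM.sup_eq i j hj.symm ▸ le_sup_left

theorem lt_top (hM : IsMkCopy u v a) (hk : 2 ≤ k) (i : Fin k) : a i < v := by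
  have : Nontrivial (Fin k) := Fin.nontrivial_iff_two_le.mpr hk
  obtain ⟨j, hj⟩ := exists_ne i
  refine (hM.le_top hk i).lt_of_ne fun hi => (hM.bot_lt j).ne ?_
  rw [← hM.inf_eq i j hj.symm, hi, inf_eq_right.mpr (hM.le_top hk j)]

theorem injective (hM : IsMkCopy u v a) : Function.Injective a := by
  intro i j h
  by_contra hij
  exact (hM.bot_lt j).ne' (by rw [← hM.inf_eq i j hij, h, inf_idem])

theorem card_mkCarrier [DecidableEq L] (hM : IsMkCopy u v a) (hk : 2 ≤ k) :
    (mkCarrier u v a).card = k + 2 := by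
  have : Nonempty (Fin k) := ⟨⟨0, by omega⟩⟩
  rw [mkCarrier, Finset.card_insert_of_notMem, Finset.card_insert_of_notMem,
    Finset.card_image_of_injective _ hM.injective, Finset.card_univ, Fintype.card_fin]
  · simpa using fun i => (hM.lt_top hk i).ne
  · simp only [Finset.mem_insert, Finset.mem_image, Finset.mem_univ, true_and, not_or,
      not_exists]
    exact ⟨((hM.bot_lt ⟨0, by omega⟩).trans (hM.lt_top hk _)).ne, fun i => (hM.bot_lt i).ne'⟩

theorem r_of_r_bot_top [DecidableEq L] (hM : IsMkCopy u v a) (hk : 2 ≤ k) (θ : LatCon L)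
    (h : θ.r u v) : ∀ x ∈ mkCarrier u v a, ∀ y ∈ mkCarrier u v a, θ.r x y := by
  have hmem : ∀ x ∈ mkCarrier u v a, θ.r u x := by
    simp only [mem_mkCarrier]
    rintro x (hx | hx | ⟨i, rfl⟩)
    · exact hx ▸ θ.refl u
    · exact hx ▸ h
    · exact θ.r_of_le_of_le h (hM.bot_lt i).le (hM.le_top hk i)
  exact fun x hx y hy => θ.trans (θ.symm (hmem x hx)) (hmem y hy)

theorem r_bot_top_of_r_bot (hM : IsMkCopy u v a) (hk : 3 ≤ k) (θ : LatCon L) {i : Fin k}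
    (h : θ.r u (a i)) : θ.r u v := by
  obtain ⟨j, hji, -⟩ := Fin.exists_ne_and_ne hk i i
  -- a third atom `a l` carries the collapse from `a i` over to `a j`
  obtain ⟨l, hli, hlj⟩ := Fin.exists_ne_and_ne hk i j
  have hl : θ.r (a l) v := by
    simpa [sup_eq_left.mpr (hM.bot_lt l).le, hM.sup_eq l i hli] using θ.sup (θ.refl (a l)) h
  have hj : θ.r u (a j) := by
    simpa [hM.inf_eq j l hlj.symm, inf_eq_left.mpr (hM.le_top (by omega) j)] using
      θ.inf (θ.refl (a j)) hl
  simpa [hM.sup_eq i j hji.symm] using θ.sup h hj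

theorem r_bot_top_of_r_top (hM : IsMkCopy u v a) (hk : 3 ≤ k) (θ : LatCon L) {i : Fin k}
    (h : θ.r (a i) v) : θ.r u v := by
  obtain ⟨j, hj, -⟩ := Fin.exists_ne_and_ne hk i i
  refine hM.r_bot_top_of_r_bot hk θ (i := j) ?_
  simpa [hM.inf_eq i j hj.symm, inf_eq_right.mpr (hM.le_top (by omega) j)] using
    θ.r_inf_right (a j) h

theorem r_bot_top_of_r [DecidableEq L] (hM : IsMkCopy u v a) (hk : 3 ≤ k) (θ : LatCon L)
    {x y : L} (hx : x ∈ mkCarrier u v a) (hy : y ∈ mkCarrier u v a) (hxy : x ≠ y)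
    (h : θ.r x y) : θ.r u v := by
  simp only [mem_mkCarrier] at hx hy
  rcases hx with rfl | rfl | ⟨i, rfl⟩ <;> rcases hy with rfl | rfl | ⟨j, rfl⟩
  · exact absurd rfl hxy
  · exact h
  · exact hM.r_bot_top_of_r_bot hk θ h
  · exact θ.symm h
  · exact absurd rfl hxy
  · exact hM.r_bot_top_of_r_top hk θ (θ.symm h)
  · exact hM.r_bot_top_of_r_bot hk θ (θ.symm h)
  · exact hM.r_bot_top_of_r_top hk θ h
  · have hij : i ≠ j := fun hij => hxy (congrArg a hij)
    exact hM.r_bot_top_of_r_bot hk θ (by simpa [hM.inf_eq i j hij] using θ.r_inf_right (a j) h)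

theorem pairwise_not_r [DecidableEq L] (hM : IsMkCopy u v a) (hk : 3 ≤ k) {θ : LatCon L}
    (h : ¬ θ.r u v) : (mkCarrier u v a : Set L).Pairwise fun x y => ¬ θ.r x y :=
  fun _ hx _ hy hxy hr => h (hM.r_bot_top_of_r hk θ hx hy hxy hr)

variable [Finite L]

theorem mkPotential_strictAnti (hM : IsMkCopy u v a) (hk : 3 ≤ k) :
    StrictAnti (mkPotential u v k) := by
  classical
  intro θ φ h
  have hφ_of_hθ : θ.r u v → φ.r u v := LatCon.le_def.mp h.le u v
  have hlt := LatCon.numClasses_lt_of_lt h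
  by_cases hθ : θ.r u v
  · simpa [mkPotential, hθ, hφ_of_hθ hθ] using hlt
  by_cases hφ : φ.r u v
  · have := LatCon.numClasses_add_card_le h.le (hM.pairwise_not_r hk hθ)
      (hM.r_of_r_bot_top (by omega) φ hφ)
    rw [hM.card_mkCarrier (by omega)] at this
    simp only [mkPotential, hθ, hφ, if_true, if_false]
    omega
  · simpa [mkPotential, hθ, hφ] using hlt

theorem mkPotential_mem_Icc (hM : IsMkCopy u v a) (hk : 3 ≤ k) (θ : LatCon L) :
    mkPotential u v k θ ∈ Set.Icc (k + 1) (Nat.card L) := by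
  classical
  have : Nonempty L := ⟨u⟩
  have hcard := hM.card_mkCarrier (by omega)
  by_cases hθ : θ.r u v
  · have := θ.numClasses_add_card_le_card (hM.r_of_r_bot_top (by omega) θ hθ)
    have := θ.numClasses_pos
    simp only [mkPotential, hθ, if_true, Set.mem_Icc]
    omega
  · have := θ.card_le_numClasses (hM.pairwise_not_r hk hθ)
    have := θ.numClasses_le_card
    simp only [mkPotential, hθ, if_false, Set.mem_Icc]
    omega

end IsMkCopy

end Mk

theorem latCd_le_of_card_le {L : Type} [Lattice L] {k : ℕ} (hk : k < Nat.card L)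
    (h : Nat.card (LatCon L) ≤ 2 ^ (Nat.card L - 1 - k)) : latCd L ≤ (2 : ℝ) ^ (-(k : ℤ)) := by
  rw [latCd, div_le_iff₀ (by positivity)]
  calc (Nat.card (LatCon L) : ℝ) ≤ (2 : ℝ) ^ (Nat.card L - 1 - k) := by exact_mod_cast h
    _ = 2 ^ (-(k : ℤ)) * 2 ^ (Nat.card L - 1) := by
      rw [← zpow_natCast, ← zpow_natCast, ← zpow_add₀ two_ne_zero]
      congr 1
      omega

/-- If a finite lattice `L` contains a copy of `M_k` (`k ≥ 3`) with bottom `u`, top `v`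
and atoms `a 0, …, a (k-1)`, such that `u` is covered in `L` by each `a i`, then
`cd L ≤ 2 ^ (−k)`. -/
theorem latCd_le_of_Mk (L : Type) [Lattice L] [Finite L] (k : ℕ) (hk : 3 ≤ k)
    (u v : L) (a : Fin k → L)
    (hcov : ∀ i, u ⋖ a i)
    (hsup : ∀ i j, i ≠ j → a i ⊔ a j = v)
    (hinf : ∀ i j, i ≠ j → a i ⊓ a j = u) :
    latCd L ≤ (2 : ℝ) ^ (-(k : ℤ)) := by
  have hM : IsMkCopy u v a := ⟨fun i => (hcov i).lt, hsup, hinf⟩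
  have hk_lt : k < Nat.card L := Set.nonempty_Icc.mp ⟨_, hM.mkPotential_mem_Icc hk ⊥⟩
  refine latCd_le_of_card_le hk_lt (card_le_two_pow_of_length_le fun p => ?_)
  have := p.length_le_of_strictAnti (hM.mkPotential_strictAnti hk) (hM.mkPotential_mem_Icc hk)
  omega
end

section
/- For every finite lattice L, the skeleton Skel L := Jr L ∪ Mr L ∪ ⋃_{x∈Jr L} {lower covers of x} ∪ ⋃_{x∈Mr L} {upper covers of x} is a sublattice of L. -/
/-- The skeleton of `L`: the reducible elements together with the lower covers of the
join-reducible elements and the upper covers of the meet-reducible elements. -/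
def Skel (L : Type) [Lattice L] : Set L :=
  Jr L ∪ Mr L ∪ {y | ∃ x ∈ Jr L, y ⋖ x} ∪ {y | ∃ x ∈ Mr L, x ⋖ y}

/-- For every finite lattice `L`, the skeleton `Skel L` is a sublattice of `L`. -/
theorem skel_sublattice (L : Type) [Lattice L] [Finite L] :
    ∀ x ∈ Skel L, ∀ y ∈ Skel L, x ⊔ y ∈ Skel L ∧ x ⊓ y ∈ Skel L := by
  intro x hx y hy
  by_cases h : x ≤ y
  · simpa [sup_eq_right.mpr h, inf_eq_left.mpr h] using ⟨hy, hx⟩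
  by_cases h' : y ≤ x
  · simpa [sup_eq_left.mpr h', inf_eq_right.mpr h'] using ⟨hx, hy⟩
  -- incomparable case
  have hlt1 : x < x ⊔ y := left_lt_sup.mpr h'
  have hlt2 : y < x ⊔ y := right_lt_sup.mpr h
  obtain ⟨c1, hc1x, hc1⟩ := hlt1.exists_le_covby
  obtain ⟨c2, hc2y, hc2⟩ := hlt2.exists_le_covby
  have hsup : x ⊔ y ∈ Jr L := by
    refine ⟨c1, c2, hc1, hc2, fun he => ?_⟩
    exact hc1.lt.ne (le_antisymm hc1.le (sup_le hc1x (he ▸ hc2y)))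
  have hlt3 : x ⊓ y < x := inf_lt_left.mpr h
  have hlt4 : x ⊓ y < y := inf_lt_right.mpr h'
  obtain ⟨d1, hd1, hd1x⟩ := hlt3.exists_covby_le
  obtain ⟨d2, hd2, hd2y⟩ := hlt4.exists_covby_le
  have hinf : x ⊓ y ∈ Mr L := by
    refine ⟨d1, d2, hd1, hd2, fun he => ?_⟩
    exact hd1.lt.ne' (le_antisymm (le_inf hd1x (he ▸ hd2y)) hd1.le)
  exact ⟨Or.inl (Or.inl (Or.inl hsup)), Or.inl (Or.inl (Or.inr hinf))⟩
end

section
/- Let L be a finite lattice in which the bottom element 0 is meet-reducible and the top element 1 is join-reducible, and let S = Skel L be its skeleton sublattice. Then L = ⋃ { [u,v]_L : (u,v) an edge of S }, and for every edge (u,v) of S, the interval [u,v]_L is a chain. -/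
/-- `(u, v)` is an edge of the skeleton: `u, v ∈ Skel L`, `u < v`, and no element of
`Skel L` lies strictly between them (covering inside the sublattice `Skel L`). -/
def SkelEdge (L : Type) [Lattice L] (u v : L) : Prop :=
  u ∈ Skel L ∧ v ∈ Skel L ∧ u < v ∧ ∀ w ∈ Skel L, ¬ (u < w ∧ w < v)

/-!
If `a` and `b` are incomparable, then `a ⊓ b` has an upper cover below `a` and another one
below `b`, so `a ⊓ b` lies in `Mr L` and these covers lie in the skeleton. Consequently, if `u`
is a maximal skeleton element below `x`, then no element above `u` is incomparable with `x`:
its meet with `x` would be `u` itself, and the cover of `u` towards `x` would be a larger skeleton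
element below `x`. For an edge `(u, v)` and `a ∈ [u, v)`, `u` is such a maximal element below
`a`, which makes `[u, v]` a chain; for the covering, take `u` maximal below `x` and `v` minimal
strictly above `x` in the skeleton.
-/

lemma Jr_subset_Skel (L : Type) [Lattice L] : Jr L ⊆ Skel L :=
  fun _ h => Or.inl (Or.inl (Or.inl h))

lemma Mr_subset_Skel (L : Type) [Lattice L] : Mr L ⊆ Skel L :=
  fun _ h => Or.inl (Or.inl (Or.inr h))

section StronglyAtomic

variable {L : Type} [Lattice L] [IsStronglyAtomic L]

lemma inf_mem_Mr_of_not_le {a b : L} (hab : ¬a ≤ b) (hba : ¬b ≤ a) : a ⊓ b ∈ Mr L := by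
  obtain ⟨c, hc, hca⟩ := exists_covBy_le_of_lt (inf_lt_left.2 hab)
  obtain ⟨d, hd, hdb⟩ := exists_covBy_le_of_lt (inf_lt_right.2 hba)
  refine ⟨c, d, hc, hd, ?_⟩
  rintro rfl
  exact hc.lt.not_ge (le_inf hca hdb)

lemma exists_mem_Skel_of_mem_Mr_of_lt {m a : L} (hm : m ∈ Mr L) (hma : m < a) :
    ∃ c ∈ Skel L, m < c ∧ c ≤ a := by
  obtain ⟨c, hc, hca⟩ := exists_covBy_le_of_lt hma
  exact ⟨c, Or.inr ⟨m, hm, hc⟩, hc.lt, hca⟩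

lemma le_total_of_maximal_Skel_le {u x w : L} (hu : Maximal (fun s => s ∈ Skel L ∧ s ≤ x) u)
    (huw : u ≤ w) : w ≤ x ∨ x ≤ w := by
  by_contra! ⟨hwx, hxw⟩
  have hm : w ⊓ x ∈ Mr L := inf_mem_Mr_of_not_le hwx hxw
  have hum : u = w ⊓ x :=
    hu.eq_of_le ⟨Mr_subset_Skel L hm, inf_le_right⟩ (le_inf huw hu.prop.2)
  obtain ⟨c, hcS, hmc, hcx⟩ := exists_mem_Skel_of_mem_Mr_of_lt hm (inf_lt_right.2 hxw)
  rw [← hum] at hmc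
  exact hmc.not_ge (hu.2 ⟨hcS, hcx⟩ hmc.le)

lemma isChain_Icc_of_skelEdge {u v : L} (huv : SkelEdge L u v) :
    IsChain (· ≤ ·) (Set.Icc u v) := by
  obtain ⟨huS, -, -, hedge⟩ := huv
  rintro a ⟨hua, hav⟩ b ⟨hub, hbv⟩ -
  rcases hav.eq_or_lt with rfl | hav
  · exact Or.inr hbv
  have hu : Maximal (fun s => s ∈ Skel L ∧ s ≤ a) u := by
    refine ⟨⟨huS, hua⟩, fun s ⟨hsS, hsa⟩ hus => ?_⟩
    by_contra hsu
    exact hedge s hsS ⟨hus.lt_of_not_ge hsu, hsa.trans_lt hav⟩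
  exact (le_total_of_maximal_Skel_le hu hub).symm

end StronglyAtomic

lemma exists_skelEdge_mem_Icc {L : Type} [Lattice L] [Finite L] [BoundedOrder L] [Nontrivial L]
    (hbot : (⊥ : L) ∈ Skel L) (htop : (⊤ : L) ∈ Skel L) (x : L) :
    ∃ u v : L, SkelEdge L u v ∧ x ∈ Set.Icc u v := by
  rcases eq_or_ne x ⊤ with rfl | hx
  · obtain ⟨u, -, hu⟩ := Finite.exists_le_maximal (p := fun s => s ∈ Skel L ∧ s < ⊤)
      ⟨hbot, bot_lt_top⟩
    refine ⟨u, ⊤, ⟨hu.prop.1, htop, hu.prop.2, ?_⟩, hu.prop.2.le, le_rfl⟩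
    rintro w hw ⟨huw, hwt⟩
    exact huw.not_ge (hu.2 ⟨hw, hwt⟩ huw.le)
  obtain ⟨u, -, hu⟩ := Finite.exists_le_maximal (p := fun s => s ∈ Skel L ∧ s ≤ x)
    ⟨hbot, bot_le⟩
  obtain ⟨v, -, hv⟩ := Finite.exists_le_minimal (p := fun s => s ∈ Skel L ∧ x < s)
    ⟨htop, hx.lt_top⟩
  refine ⟨u, v, ⟨hu.prop.1, hv.prop.1, hu.prop.2.trans_lt hv.prop.2, ?_⟩,
    hu.prop.2, hv.prop.2.le⟩
  rintro w hw ⟨huw, hwv⟩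
  by_cases hwx : w ≤ x
  · exact huw.not_ge (hu.2 ⟨hw, hwx⟩ huw.le)
  have hxw : x < w := ((le_total_of_maximal_Skel_le hu huw.le).resolve_left hwx).lt_of_not_ge hwx
  exact hwv.not_ge (hv.2 ⟨hw, hxw⟩ hwv.le)

/-- If `L` is a finite lattice whose bottom is meet-reducible and whose top is
join-reducible, then `L` is the union of the intervals `[u,v]_L` over the edges `(u,v)`
of `Skel L`, and each such interval is a chain. -/
theorem skel_edges_cover_and_chains (L : Type) [Lattice L] [Finite L] [BoundedOrder L]
    (h0 : (⊥ : L) ∈ Mr L) (h1 : (⊤ : L) ∈ Jr L) :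
    (∀ x : L, ∃ u v : L, SkelEdge L u v ∧ x ∈ Set.Icc u v) ∧
      ∀ u v : L, SkelEdge L u v → IsChain (· ≤ ·) (Set.Icc u v) := by
  have : Nontrivial L := by
    obtain ⟨y, -, hy, -⟩ := h0
    exact ⟨⟨⊥, ⊤, (hy.lt.trans_le le_top).ne⟩⟩
  exact ⟨exists_skelEdge_mem_Icc (Mr_subset_Skel L h0) (Jr_subset_Skel L h1),
    fun _ _ => isChain_Icc_of_skelEdge⟩
end

section
/- Let L be a finite semimodular lattice with 0 meet-reducible and 1 join-reducible, let S = Skel L, and let (u,v) be an edge of S such that not both u and v are narrows of L. Then [u,v]_L = {u,v}, i.e., u is covered by v in L. -/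
/-- A lattice is semimodular if `x ⋖ y` implies that `y ⊔ z` covers or equals `x ⊔ z`. -/
def IsSemimodular (L : Type) [Lattice L] : Prop :=
  ∀ x y z : L, x ⋖ y → (x ⊔ z = y ⊔ z ∨ (x ⊔ z) ⋖ (y ⊔ z))

/-- `w` is a narrows of `L` if it is comparable with every element of `L`. -/
def Narrows (L : Type) [Lattice L] (w : L) : Prop := ∀ x : L, w ≤ x ∨ x ≤ w

/-- Let `L` be a finite semimodular lattice with meet-reducible bottom and join-reducible
top, and let `(u, v)` be an edge of `Skel L` such that not both `u` and `v` are narrows of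
`L`.  Then `[u,v]_L = {u, v}`, i.e., `u` is covered by `v` in `L`. -/
theorem skel_edge_is_cover_of_not_narrows (L : Type) [Lattice L] [Finite L]
    [BoundedOrder L] (hsm : IsSemimodular L)
    (h0 : (⊥ : L) ∈ Mr L) (h1 : (⊤ : L) ∈ Jr L)
    (u v : L) (he : SkelEdge L u v) (hn : ¬ (Narrows L u ∧ Narrows L v)) :
    Set.Icc u v = {u, v} ∧ u ⋖ v := by
  obtain ⟨hu, hv, huv, hbetween⟩ := he
  have hcov : u ⋖ v := by
    by_contra hnc
    -- no element strictly between u and v is in the skeleton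
    have hNS : ∀ w : L, u < w → w < v → w ∉ Skel L :=
      fun w h1 h2 hw => hbetween w hw ⟨h1, h2⟩
    -- every w with u ≤ w < v is meet-irreducible
    have hA : ∀ w : L, u ≤ w → w < v → w ∉ Mr L := by
      intro w hw1 hw2 hwM
      rcases eq_or_lt_of_le hw1 with rfl | hlt
      · obtain ⟨c, hc1, hc2⟩ := exists_covBy_le_of_lt huv
        have hcv : c < v := lt_of_le_of_ne hc2 (fun h => hnc (h ▸ hc1))
        exact hNS c hc1.lt hcv (Or.inr ⟨u, hwM, hc1⟩)
      · exact hNS w hlt hw2 (Mr_subset_Skel L hwM)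
    -- every w with u < w ≤ v is join-irreducible
    have hB : ∀ w : L, u < w → w ≤ v → w ∉ Jr L := by
      intro w hw1 hw2 hwJ
      rcases eq_or_lt_of_le hw2 with rfl | hlt
      · obtain ⟨d, hd1, hd2⟩ := exists_le_covBy_of_lt huv
        have hud : u < d := lt_of_le_of_ne hd1 (fun h => hnc (h ▸ hd2))
        exact hNS d hud hd2.lt (Or.inl (Or.inr ⟨w, hwJ, hd2⟩))
      · exact hNS w hw1 hlt (Jr_subset_Skel L hwJ)
    have hupUniq : ∀ w : L, w ∉ Mr L → ∀ a b : L, w ⋖ a → w ⋖ b → a = b := by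
      intro w hw a b ha hb
      by_contra hne
      exact hw ⟨a, b, ha, hb, hne⟩
    have hdownUniq : ∀ w : L, w ∉ Jr L → ∀ a b : L, a ⋖ w → b ⋖ w → a = b := by
      intro w hw a b ha hb
      by_contra hne
      exact hw ⟨a, b, ha, hb, hne⟩
    -- Claim 1: if x is incomparable to u, then every c in [u,v] satisfies c < u ⊔ x
    have claim1 : ∀ x : L, ¬ u ≤ x → ¬ x ≤ u →
        ∀ c : L, u ≤ c → c ≤ v → c ≤ u ⊔ x ∧ c ≠ u ⊔ x := by
      intro x hux hxu c
      induction c using WellFoundedLT.induction with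
      | _ c IH =>
        intro huc hcv
        rcases eq_or_lt_of_le huc with rfl | hlt
        · exact ⟨le_sup_left, fun h => hxu (left_eq_sup.mp h)⟩
        · obtain ⟨d, hud, hdc⟩ := exists_le_covBy_of_lt hlt
          obtain ⟨hd1, hd2⟩ := IH d hdc.lt hud (le_of_lt (lt_of_lt_of_le hdc.lt hcv))
          have hdlt : d < u ⊔ x := lt_of_le_of_ne hd1 hd2
          obtain ⟨e, hde, hex⟩ := exists_covBy_le_of_lt hdlt
          have hdA : d ∉ Mr L := hA d hud (lt_of_lt_of_le hdc.lt hcv)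
          have hec : e = c := hupUniq d hdA e c hde hdc
          refine ⟨hec ▸ hex, ?_⟩
          intro h
          have hxc : x ≤ c := h ▸ le_sup_right
          have hxc' : x < c := lt_of_le_of_ne hxc (fun hh => hux (hh ▸ huc))
          obtain ⟨d', hxd', hd'c⟩ := exists_le_covBy_of_lt hxc'
          have : d' = d := hdownUniq c (hB c hlt hcv) d' d hd'c hdc
          have hcd : c ≤ d := h ▸ sup_le hud (this ▸ hxd')
          exact absurd hcd (not_le_of_gt hdc.lt)
    -- Claim 2: if x is incomparable to v, then every c in [u,v] satisfies v ⊓ x < c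
    have claim2 : ∀ x : L, ¬ v ≤ x → ¬ x ≤ v →
        ∀ c : L, u ≤ c → c ≤ v → v ⊓ x ≤ c ∧ v ⊓ x ≠ c := by
      intro x hvx hxv c
      induction c using WellFoundedGT.induction with
      | _ c IH =>
        intro huc hcv
        rcases eq_or_lt_of_le hcv with rfl | hlt
        · exact ⟨inf_le_left, fun h => hvx (inf_eq_left.mp h)⟩
        · obtain ⟨e, hce, hev⟩ := exists_covBy_le_of_lt hlt
          obtain ⟨he1, he2⟩ := IH e hce.lt (le_of_lt (lt_of_le_of_lt huc hce.lt)) hev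
          have helt : v ⊓ x < e := lt_of_le_of_ne he1 he2
          obtain ⟨d, hvd, hde⟩ := exists_le_covBy_of_lt helt
          have heB : e ∉ Jr L := hB e (lt_of_le_of_lt huc hce.lt) hev
          have hdc : d = c := hdownUniq e heB d c hde hce
          refine ⟨hdc ▸ hvd, ?_⟩
          intro h
          have hcx : c ≤ x := h ▸ inf_le_right
          have hcx' : c < x := lt_of_le_of_ne hcx (fun hh => hxv (hh ▸ hcv))
          obtain ⟨e', hce', he'x⟩ := exists_covBy_le_of_lt hcx'
          have : e' = e := hupUniq c (hA c huc hlt) e' e hce' hce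
          have hec : e ≤ c := h ▸ le_inf hev (this ▸ he'x)
          exact absurd hec (not_le_of_gt hce.lt)
    -- u is a narrows
    have nu : Narrows L u := by
      intro x
      by_contra hx
      push_neg at hx
      obtain ⟨hux, hxu⟩ := hx
      have hyx : u ⊓ x < x :=
        lt_of_le_of_ne inf_le_right (fun h => hxu (h ▸ inf_le_left))
      obtain ⟨t, htc, htx⟩ := exists_covBy_le_of_lt hyx
      have hsup : (u ⊓ x) ⊔ u = u := sup_eq_right.mpr inf_le_left
      have htu : ¬ t ≤ u := by
        intro h
        exact absurd (le_inf h htx) (not_le_of_gt htc.lt)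
      have hut : ¬ u ≤ t := fun h => hux (le_trans h htx)
      rcases hsm (u ⊓ x) t u htc with hcase | hcase
      · rw [hsup] at hcase
        exact htu (sup_eq_right.mp hcase.symm)
      · rw [hsup] at hcase
        have hcase' : u ⋖ u ⊔ t := by rwa [sup_comm] at hcase
        obtain ⟨hv1, hv2⟩ := claim1 t hut htu v (le_of_lt huv) le_rfl
        have hvlt : v < u ⊔ t := lt_of_le_of_ne hv1 hv2
        exact hcase'.2 huv hvlt
    -- v is a narrows
    have nv : Narrows L v := by
      intro x
      rcases nu x with h | h
      · by_contra hx
        push_neg at hx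
        obtain ⟨hvx, hxv⟩ := hx
        obtain ⟨h1, h2⟩ := claim2 x hvx hxv u le_rfl (le_of_lt huv)
        have : u ≤ v ⊓ x := le_inf (le_of_lt huv) h
        exact h2 (le_antisymm h1 this)
      · exact Or.inr (le_trans h (le_of_lt huv))
    exact hn ⟨nu, nv⟩
  refine ⟨?_, hcov⟩
  ext x
  simp only [Set.mem_Icc, Set.mem_insert_iff, Set.mem_singleton_iff]
  constructor
  · rintro ⟨h1, h2⟩
    rcases eq_or_lt_of_le h1 with rfl | hlt
    · exact Or.inl rfl
    · right
      rcases eq_or_lt_of_le h2 with rfl | hlt2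
      · rfl
      · exact absurd hlt2 (hcov.2 hlt)
  · rintro (rfl | rfl)
    · exact ⟨le_rfl, le_of_lt huv⟩
    · exact ⟨le_of_lt huv, le_rfl⟩
end
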